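/- arXiv:1807.03638 — 3 statements merged into one kernel-verified Lean document; each statement's English description precedes it below -/
import Mathlib

section
/- Let (R, α) be a Hom-associative conformal superalgebra. Then the λ-bracket defined by [a_λ b] := a_λ b − (−1)^{|a||b|} b_{−λ−∂} a for all homogeneous a, b ∈ R makes (R, α) a Hom-Lie conformal superalgebra. -/
/-!
Hom-associativity `α(a)_λ (b_μ c) = (a_λ b)_{λ+μ} α(c)` is an identity between polynomials in
`λ` and `μ`, so it persists when `λ` and `μ` are replaced by commuting operators, in particular
by affine ones `x + y∂`; moving `∂` out of the right (left) slot of a product turns it into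
`∂ + λ` (into `-λ`). This yields five companions of Hom-associativity, such as
`α(a)_λ (c_{-μ-∂} b) = (a_λ c)_{-μ-∂} α(b)`. Expanding the Jacobi identity for
`[a_λ b] = a_λ b - (-1)^{|a||b|} b_{-λ-∂} a` on homogeneous elements, these six identities match
its terms in pairs, with matching signs because `(-1)^{|a||b|}` is symmetric and
bimultiplicative. Skew-symmetry holds because `λ ↦ -λ-∂` is an involution, and sesquilinearity
is inherited from the product.
-/

noncomputable section

namespace HLCS

open scoped BigOperators

/-- Evaluation at `l : ℂ` of a polynomial (in `λ`) with coefficients in `M`,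
encoded as a finitely supported family of coefficients. -/
def pev {M : Type} [AddCommGroup M] [Module ℂ M] (l : ℂ) (p : ℕ →₀ M) : M :=
  p.sum fun n r => l ^ n • r

/-- Evaluation of a polynomial with coefficients in `M` at an operator `T`
(used for substitutions such as `-λ - ∂`). -/
def pevOp {M : Type} [AddCommGroup M] [Module ℂ M] (T : Module.End ℂ M) (p : ℕ →₀ M) : M :=
  p.sum fun n r => (T ^ n) r

/-- The super sign `(-1)^{|a||b|}` attached to parities `i`, `j`. -/
def sg (i j : ZMod 2) : ℂ := (-1 : ℂ) ^ (i * j).val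

/-- The data of a `ℤ₂`-graded `ℂ[∂]`-module `R` with an endomorphism `α` and a
`ℂ`-bilinear `λ`-bracket with values in `ℂ[λ] ⊗ R` (encoded by its coefficients). -/
structure Data (R : Type) [AddCommGroup R] [Module ℂ R] where
  der : Module.End ℂ R
  alpha : Module.End ℂ R
  G : ZMod 2 → Submodule ℂ R
  br : R →ₗ[ℂ] R →ₗ[ℂ] (ℕ →₀ R)

namespace Data

variable {R : Type} [AddCommGroup R] [Module ℂ R] (S : Data R)

/-- `[a_λ b]` evaluated at `λ = l`. -/
def lb (l : ℂ) (a b : R) : R := pev l (S.br a b)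

/-- `[a_{-l-∂} b]` : the bracket with `-l - ∂` substituted for `λ`. -/
def lbOp (l : ℂ) (a b : R) : R :=
  pevOp ((-l) • (1 : Module.End ℂ R) - S.der) (S.br a b)

/-- Multiplicativity: `α [a_λ b] = [α(a)_λ α(b)]`. -/
def Mult : Prop := ∀ (l : ℂ) (a b : R), S.alpha (S.lb l a b) = S.lb l (S.alpha a) (S.alpha b)

end Data

variable {R : Type} [AddCommGroup R] [Module ℂ R]

/-- `(R, α)` with the given data is a Hom-Lie conformal superalgebra.
All polynomial identities in `λ, μ` are stated by evaluating at arbitrary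
complex numbers (which is equivalent, `ℂ` being infinite). -/
structure IsHLCS (S : Data R) : Prop where
  internal : DirectSum.IsInternal S.G
  der_even : ∀ i, ∀ a ∈ S.G i, S.der a ∈ S.G i
  alpha_even : ∀ i, ∀ a ∈ S.G i, S.alpha a ∈ S.G i
  alpha_der : ∀ a, S.alpha (S.der a) = S.der (S.alpha a)
  br_grade : ∀ i j, ∀ a ∈ S.G i, ∀ b ∈ S.G j, ∀ n, S.br a b n ∈ S.G (i + j)
  conf_left : ∀ (l : ℂ) (a b : R), S.lb l (S.der a) b = -l • S.lb l a b
  conf_right : ∀ (l : ℂ) (a b : R), S.lb l a (S.der b) = S.der (S.lb l a b) + l • S.lb l a b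
  skew : ∀ i j, ∀ a ∈ S.G i, ∀ b ∈ S.G j, ∀ l : ℂ,
    S.lb l a b = (-sg i j) • S.lbOp l b a
  jacobi : ∀ i j, ∀ a ∈ S.G i, ∀ b ∈ S.G j, ∀ (c : R) (l m : ℂ),
    S.lb l (S.alpha a) (S.lb m b c) =
      S.lb (l + m) (S.lb l a b) (S.alpha c) + sg i j • S.lb m (S.alpha b) (S.lb l a c)

end HLCS
namespace HLCS

variable {R : Type} [AddCommGroup R] [Module ℂ R]

/-- `(R, α)` with the given data is a Hom-associative conformal superalgebra. -/
structure IsHAssoc (S : Data R) : Prop where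
  internal : DirectSum.IsInternal S.G
  der_even : ∀ i, ∀ a ∈ S.G i, S.der a ∈ S.G i
  alpha_even : ∀ i, ∀ a ∈ S.G i, S.alpha a ∈ S.G i
  alpha_der : ∀ a, S.alpha (S.der a) = S.der (S.alpha a)
  br_grade : ∀ i j, ∀ a ∈ S.G i, ∀ b ∈ S.G j, ∀ n, S.br a b n ∈ S.G (i + j)
  conf_left : ∀ (l : ℂ) (a b : R), S.lb l (S.der a) b = -l • S.lb l a b
  conf_right : ∀ (l : ℂ) (a b : R), S.lb l a (S.der b) = S.der (S.lb l a b) + l • S.lb l a b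
  assoc : ∀ (l m : ℂ) (a b c : R),
    S.lb l (S.alpha a) (S.lb m b c) = S.lb (l + m) (S.lb l a b) (S.alpha c)


section PolynomialEvaluation

variable {M N : Type} [AddCommGroup M] [Module ℂ M] [AddCommGroup N] [Module ℂ N]

def pevOpₗ (T : Module.End ℂ M) : (ℕ →₀ M) →ₗ[ℂ] M :=
  Finsupp.lsum ℂ fun n => T ^ n

theorem pevOpₗ_apply (T : Module.End ℂ M) (p : ℕ →₀ M) :
    pevOpₗ T p = p.sum fun n x => (T ^ n) x := rfl

theorem pev_eq_pevOpₗ (l : ℂ) (p : ℕ →₀ M) : pev l p = pevOpₗ (l • 1) p := by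
  simp [pev, pevOpₗ_apply, smul_pow]

@[simp]
theorem pevOpₗ_single (T : Module.End ℂ M) (n : ℕ) (x : M) :
    pevOpₗ T (Finsupp.single n x) = (T ^ n) x := by
  simp [pevOpₗ]

theorem pevOpₗ_mapDomain_add (T : Module.End ℂ M) (n : ℕ) (p : ℕ →₀ M) :
    pevOpₗ T (Finsupp.lmapDomain M ℂ (· + n) p) = (T ^ n) (pevOpₗ T p) := by
  rw [Finsupp.lmapDomain_apply, Finsupp.mapDomain, map_finsuppSum, pevOpₗ_apply, map_finsuppSum]
  refine Finsupp.sum_congr fun k _ => ?_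
  rw [pevOpₗ_single, add_comm, pow_add, Module.End.mul_apply]

theorem pevOpₗ_mapRange (f : M →ₗ[ℂ] N) {T : Module.End ℂ M} {T' : Module.End ℂ N}
    (h : ∀ x, f (T x) = T' (f x)) (p : ℕ →₀ M) :
    pevOpₗ T' (Finsupp.mapRange.linearMap f p) = f (pevOpₗ T p) := by
  have hpow : ∀ n x, f ((T ^ n) x) = (T' ^ n) (f x) := by
    intro n
    induction n with
    | zero => simp
    | succ n ih => intro x; rw [pow_succ, pow_succ, Module.End.mul_apply, ih, h]; rfl
  simp [pevOpₗ_apply, Finsupp.sum_mapRange_index, map_finsuppSum, hpow]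

theorem pevOpₗ_mapRange_eq_sum (f : M →ₗ[ℂ] N) (T : Module.End ℂ N) (p : ℕ →₀ M) :
    pevOpₗ T (Finsupp.mapRange.linearMap f p) = p.sum fun n x => (T ^ n) (f x) := by
  simp [pevOpₗ_apply, Finsupp.sum_mapRange_index]

theorem pevOpₗ_mapRange_of_commute {T D : Module.End ℂ M} (h : Commute T D) (p : ℕ →₀ M) :
    pevOpₗ T (Finsupp.mapRange.linearMap D p) = D (pevOpₗ T p) :=
  pevOpₗ_mapRange D (fun x => (LinearMap.congr_fun h x).symm) p

theorem pevOpₗ_smul_one_mapRange (f : M →ₗ[ℂ] N) (l : ℂ) (p : ℕ →₀ M) :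
    pevOpₗ (l • 1) (Finsupp.mapRange.linearMap f p) = f (pevOpₗ (l • 1) p) :=
  pevOpₗ_mapRange f (fun x => by simp) p

theorem pevOpₗ_mem {W : Submodule ℂ M} {T : Module.End ℂ M} (hT : ∀ x ∈ W, T x ∈ W)
    {p : ℕ →₀ M} (hp : ∀ n, p n ∈ W) : pevOpₗ T p ∈ W :=
  W.finsuppSum_mem ℂ p _ fun n _ => Module.End.pow_apply_mem_of_forall_mem n hT _ (hp n)

theorem eq_of_forall_pevOpₗ_smul_one {p q : ℕ →₀ M}
    (h : ∀ l : ℂ, pevOpₗ (l • 1) p = pevOpₗ (l • 1) q) : p = q := by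
  rw [← sub_eq_zero]
  ext m
  refine (Module.forall_dual_apply_eq_zero_iff ℂ _).mp fun φ => ?_
  set r := p - q
  set P : Polynomial ℂ := .ofFinsupp (.ofCoeff (Finsupp.mapRange.linearMap φ r))
  have hP : P = 0 := Polynomial.funext fun l => by
    have hl : pevOpₗ (l • 1) r = 0 := by simp [r, h l]
    rw [Polynomial.eval_zero, ← map_zero φ, ← hl, pevOpₗ_apply]
    simp only [P, Polynomial.eval_eq_sum, Polynomial.sum_def, map_finsuppSum, smul_pow, one_pow,
      Polynomial.support_ofFinsupp, Polynomial.coeff_ofFinsupp]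
    change (Finsupp.mapRange.linearMap φ r).sum (fun n a => a * l ^ n) = _
    rw [Finsupp.mapRange.linearMap_apply, Finsupp.sum_mapRange_index fun _ => zero_mul _]
    simp [mul_comm]
  simpa [P] using congrArg (Polynomial.coeff · m) hP

def polySubmodule (W : Submodule ℂ M) : Submodule ℂ (ℕ →₀ M) :=
  ⨅ n, W.comap (Finsupp.lapply n)

theorem mem_polySubmodule {W : Submodule ℂ M} {p : ℕ →₀ M} :
    p ∈ polySubmodule W ↔ ∀ n, p n ∈ W := by
  simp [polySubmodule]

theorem single_mem_polySubmodule {W : Submodule ℂ M} (n : ℕ) {x : M} (hx : x ∈ W) :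
    Finsupp.single n x ∈ polySubmodule W :=
  mem_polySubmodule.mpr fun k => by
    rw [Finsupp.single_apply]; split_ifs <;> simp [hx]

/-- The substitution `λ ↦ u λ + D`, computed as evaluation at the operator `u λ + D` on `M[λ]`. -/
def substAff (u : ℂ) (D : Module.End ℂ M) : (ℕ →₀ M) →ₗ[ℂ] (ℕ →₀ M) :=
  pevOpₗ (u • Finsupp.lmapDomain M ℂ (· + 1) + Finsupp.mapRange.linearMap D) ∘ₗ
    Finsupp.mapRange.linearMap (Finsupp.lsingle 0)

theorem pevOpₗ_substAff (u : ℂ) {T D : Module.End ℂ M} (h : Commute T D) (p : ℕ →₀ M) :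
    pevOpₗ T (substAff u D p) = pevOpₗ (u • T + D) p := by
  rw [substAff, LinearMap.comp_apply, ← pevOpₗ_mapRange (pevOpₗ T) (T' := u • T + D), ←
    LinearMap.comp_apply (Finsupp.mapRange.linearMap _), ← Finsupp.mapRange.linearMap_comp]
  · congr 2
    ext x
    simp
  · intro q
    simp only [LinearMap.add_apply, LinearMap.smul_apply, map_add, map_smul, pow_one,
      pevOpₗ_mapDomain_add, pevOpₗ_mapRange_of_commute h]

theorem substAff_mem {W : Submodule ℂ M} (u : ℂ) {D : Module.End ℂ M} (hD : ∀ x ∈ W, D x ∈ W)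
    {p : ℕ →₀ M} (hp : ∀ n, p n ∈ W) (n : ℕ) : substAff u D p n ∈ W := by
  refine mem_polySubmodule.mp (pevOpₗ_mem (fun q hq => ?_) fun k => ?_) n
  · simp only [LinearMap.add_apply, LinearMap.smul_apply, Finsupp.lmapDomain_apply,
      Finsupp.mapDomain, Finsupp.mapRange.linearMap_apply]
    refine add_mem (Submodule.smul_mem _ _ (Submodule.finsuppSum_mem _ _ _ _ fun k _ =>
      single_mem_polySubmodule _ (mem_polySubmodule.mp hq k))) (mem_polySubmodule.mpr fun k => ?_)
    simpa using hD _ (mem_polySubmodule.mp hq k)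
  · simpa using single_mem_polySubmodule 0 (hp k)

end PolynomialEvaluation

section Grading

variable {ι M N : Type} [DecidableEq ι] [AddCommGroup M] [Module ℂ M] [AddCommGroup N]
  [Module ℂ N] (G : ι → Submodule ℂ M) [DirectSum.Decomposition G]

def gradedProj (i : ι) : M →ₗ[ℂ] M :=
  (G i).subtype ∘ₗ DirectSum.component ℂ ι (fun i => G i) i ∘ₗ
    (DirectSum.decomposeLinearEquiv G).toLinearMap

theorem gradedProj_of_mem_same {i : ι} {a : M} (ha : a ∈ G i) : gradedProj G i a = a :=
  DirectSum.decompose_of_mem_same G ha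

theorem gradedProj_of_mem_ne {i j : ι} {a : M} (ha : a ∈ G i) (hij : i ≠ j) :
    gradedProj G j a = 0 :=
  DirectSum.decompose_of_mem_ne G ha hij

theorem apply₂_eq_of_forall_homogeneous {f g : M →ₗ[ℂ] M →ₗ[ℂ] N}
    (h : ∀ i j, ∀ a ∈ G i, ∀ b ∈ G j, f a b = g a b) (a b : M) : f a b = g a b := by
  induction a using DirectSum.Decomposition.inductionOn G with
  | zero => simp
  | add a a' ha ha' => simp [ha, ha']
  | homogeneous a =>
    induction b using DirectSum.Decomposition.inductionOn G with
    | zero => simp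
    | add b b' hb hb' => simp [hb, hb']
    | homogeneous b => exact h _ _ a a.2 b b.2

end Grading

section Sign

theorem sg_comm (i j : ZMod 2) : sg i j = sg j i := by
  rw [sg, sg, mul_comm]

theorem sg_mul_self (i j : ZMod 2) : sg i j * sg i j = 1 := by
  rw [sg, ← mul_pow]; norm_num

theorem sg_add_left (i j k : ZMod 2) : sg (i + j) k = sg i k * sg j k := by
  rw [sg, add_mul, ZMod.val_add, ← neg_one_pow_eq_pow_mod_two, pow_add, sg, sg]

theorem sg_add_right (i j k : ZMod 2) : sg i (j + k) = sg i j * sg i k := by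
  rw [sg_comm, sg_add_left, sg_comm j, sg_comm k]

end Sign

namespace Data

variable (S : Data R)

def aff (α β : ℂ) : Module.End ℂ R := α • 1 + β • S.der

def opBr (T : Module.End ℂ R) : R →ₗ[ℂ] R →ₗ[ℂ] R := S.br.compr₂ (pevOpₗ T)

theorem opBr_apply (T : Module.End ℂ R) (a b : R) : S.opBr T a b = pevOpₗ T (S.br a b) := rfl

@[simp]
theorem aff_apply (α β : ℂ) (x : R) : S.aff α β x = α • x + β • S.der x := by
  simp [aff]

theorem aff_zero (l : ℂ) : S.aff l 0 = l • 1 := by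
  simp [aff]

theorem commute_aff (α β γ δ : ℂ) : Commute (S.aff α β) (S.aff γ δ) := by
  simp only [aff, Commute, SemiconjBy, add_mul, mul_add, smul_mul_smul_comm, one_mul, mul_one]
  module

theorem commute_aff_der (α β : ℂ) : Commute (S.aff α β) S.der := by
  simpa [aff] using S.commute_aff α β 0 1

theorem lb_eq_opBr_smul_one (l : ℂ) (a b : R) : S.lb l a b = S.opBr (l • 1) a b :=
  pev_eq_pevOpₗ l _

theorem lb_eq_opBr (l : ℂ) (a b : R) : S.lb l a b = S.opBr (S.aff l 0) a b := by
  rw [aff_zero, lb_eq_opBr_smul_one]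

theorem lbOp_eq_opBr (l : ℂ) (a b : R) : S.lbOp l a b = S.opBr (S.aff (-l) (-1)) a b := by
  simp [lbOp, opBr_apply, aff, sub_eq_add_neg, pevOpₗ_apply, pevOp]

theorem opBr_mem {W : ZMod 2 → Submodule ℂ R} (hder : ∀ i, ∀ a ∈ W i, S.der a ∈ W i)
    (hbr : ∀ i j, ∀ a ∈ W i, ∀ b ∈ W j, ∀ n, S.br a b n ∈ W (i + j)) {i j : ZMod 2} {a b : R}
    (ha : a ∈ W i) (hb : b ∈ W j) (α β : ℂ) : S.opBr (S.aff α β) a b ∈ W (i + j) :=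
  pevOpₗ_mem (fun x hx => by
    simpa using add_mem ((W _).smul_mem α hx) ((W _).smul_mem β (hder _ x hx))) (hbr i j a ha b hb)

variable {S}

variable (hcl : ∀ (l : ℂ) (a b : R), S.lb l (S.der a) b = -l • S.lb l a b)
  (hcr : ∀ (l : ℂ) (a b : R), S.lb l a (S.der b) = S.der (S.lb l a b) + l • S.lb l a b)
  (hassoc : ∀ (l m : ℂ) (a b c : R),
    S.lb l (S.alpha a) (S.lb m b c) = S.lb (l + m) (S.lb l a b) (S.alpha c))

include hcl in
theorem br_der_left (a b : R) :
    S.br (S.der a) b = -Finsupp.lmapDomain R ℂ (· + 1) (S.br a b) :=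
  eq_of_forall_pevOpₗ_smul_one fun l => by
    rw [map_neg, pevOpₗ_mapDomain_add, ← opBr_apply, ← opBr_apply, ← lb_eq_opBr_smul_one,
      ← lb_eq_opBr_smul_one, hcl]
    simp

include hcr in
theorem br_der_right (a b : R) :
    S.br a (S.der b) =
      Finsupp.mapRange.linearMap S.der (S.br a b) + Finsupp.lmapDomain R ℂ (· + 1) (S.br a b) :=
  eq_of_forall_pevOpₗ_smul_one fun l => by
    rw [map_add, pevOpₗ_mapDomain_add, pevOpₗ_smul_one_mapRange, ← opBr_apply, ← opBr_apply,
      ← lb_eq_opBr_smul_one, ← lb_eq_opBr_smul_one, hcr]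
    simp

include hcl in
theorem opBr_der_left (T : Module.End ℂ R) (a b : R) :
    S.opBr T (S.der a) b = -T (S.opBr T a b) := by
  rw [opBr_apply, br_der_left hcl, map_neg, pevOpₗ_mapDomain_add, pow_one, opBr_apply]

include hcr in
theorem opBr_der_right {T : Module.End ℂ R} (hT : Commute T S.der) (a b : R) :
    S.opBr T a (S.der b) = S.der (S.opBr T a b) + T (S.opBr T a b) := by
  rw [opBr_apply, br_der_right hcr, map_add, pevOpₗ_mapDomain_add, pow_one,
    pevOpₗ_mapRange_of_commute hT, opBr_apply]

include hcl in
theorem opBr_aff_left (T : Module.End ℂ R) (μ₀ μ₁ : ℂ) (x c : R) :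
    S.opBr T (S.aff μ₀ μ₁ x) c = (μ₀ • 1 - μ₁ • T) (S.opBr T x c) := by
  simp [opBr_der_left hcl, sub_eq_add_neg]

include hcr in
theorem opBr_aff_right {T : Module.End ℂ R} (hT : Commute T S.der) (μ₀ μ₁ : ℂ) (a x : R) :
    S.opBr T a (S.aff μ₀ μ₁ x) = (μ₀ • 1 + μ₁ • (S.der + T)) (S.opBr T a x) := by
  simp [opBr_der_right hcr hT]

include hassoc in
theorem opBr_alpha_lb (u : ℂ) (V : Module.End ℂ R) (a b c : R) :
    S.opBr V (S.alpha a) (S.lb u b c) =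
      pevOpₗ V (Finsupp.mapRange.linearMap ((S.opBr (u • 1 + V)).flip (S.alpha c)) (S.br a b)) := by
  set Q := (S.br a b).sum fun n y =>
    Finsupp.lmapDomain R ℂ (· + n) (substAff 1 (u • 1) (S.br y (S.alpha c)))
  have hQ : ∀ T : Module.End ℂ R, Commute T (u • 1) → pevOpₗ T Q =
      pevOpₗ T (Finsupp.mapRange.linearMap ((S.opBr (u • 1 + T)).flip (S.alpha c)) (S.br a b)) := by
    intro T hT
    rw [map_finsuppSum, pevOpₗ_mapRange_eq_sum]
    refine Finsupp.sum_congr fun n _ => ?_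
    rw [pevOpₗ_mapDomain_add, pevOpₗ_substAff 1 hT, one_smul, add_comm]
    rfl
  have hpoly : S.br (S.alpha a) (S.lb u b c) = Q := eq_of_forall_pevOpₗ_smul_one fun v => by
    rw [hQ _ ((Commute.one_left _).smul_left v |>.smul_right u), pevOpₗ_smul_one_mapRange,
      ← add_smul, add_comm u, LinearMap.flip_apply, ← opBr_apply, ← opBr_apply,
      ← lb_eq_opBr_smul_one, ← lb_eq_opBr_smul_one, ← lb_eq_opBr_smul_one, hassoc]
  rw [opBr_apply, hpoly, hQ V ((Commute.one_right V).smul_right u)]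

include hassoc in
theorem pevOpₗ_mapRange_opBr_alpha {U V : Module.End ℂ R} (hUV : Commute U V) (a b c : R) :
    pevOpₗ U (Finsupp.mapRange.linearMap (S.opBr V (S.alpha a)) (S.br b c)) =
      pevOpₗ V (Finsupp.mapRange.linearMap ((S.opBr (U + V)).flip (S.alpha c)) (S.br a b)) := by
  set Q := (S.br a b).sum fun n y =>
    Finsupp.mapRange.linearMap (V ^ n) (substAff 1 V (S.br y (S.alpha c)))
  have hQ : ∀ T : Module.End ℂ R, Commute T V → pevOpₗ T Q =
      pevOpₗ V (Finsupp.mapRange.linearMap ((S.opBr (T + V)).flip (S.alpha c)) (S.br a b)) := by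
    intro T hT
    rw [map_finsuppSum, pevOpₗ_mapRange_eq_sum]
    refine Finsupp.sum_congr fun n _ => ?_
    rw [pevOpₗ_mapRange_of_commute (hT.pow_right n), pevOpₗ_substAff 1 hT, one_smul]
    rfl
  have hpoly : Finsupp.mapRange.linearMap (S.opBr V (S.alpha a)) (S.br b c) = Q :=
    eq_of_forall_pevOpₗ_smul_one fun u => by
      rw [hQ _ ((Commute.one_left V).smul_left u), pevOpₗ_smul_one_mapRange, ← opBr_apply,
        ← lb_eq_opBr_smul_one, opBr_alpha_lb hassoc]
  rw [hpoly, hQ U hUV]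

include hcl hcr hassoc in
/-- Hom-associativity with `v₀ + v₁∂` substituted for `λ` and `μ₀ + μ₁∂` for `μ`: the
hypotheses say that the substitutions produced on the right-hand side by moving `∂` out of the
two slots are `ν₀ + ν₁∂` and `w₀ + w₁∂`. -/
theorem opBr_aff_assoc {v₀ v₁ μ₀ μ₁ ν₀ ν₁ w₀ w₁ : ℂ} (hw₀ : w₀ = μ₀ + μ₁ * v₀ + v₀)
    (hw₁ : w₁ = μ₁ * (1 + v₁) + v₁) (hv₀ : v₀ = ν₀ - ν₁ * w₀) (hv₁ : v₁ = -(ν₁ * w₁)) (a b c : R) :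
    S.opBr (S.aff v₀ v₁) (S.alpha a) (S.opBr (S.aff μ₀ μ₁) b c) =
      S.opBr (S.aff w₀ w₁) (S.opBr (S.aff ν₀ ν₁) a b) (S.alpha c) := by
  have hU : μ₀ • 1 + μ₁ • (S.der + S.aff v₀ v₁) = S.aff (μ₀ + μ₁ * v₀) (μ₁ * (1 + v₁)) := by
    simp only [aff]; module
  have hW : S.aff (μ₀ + μ₁ * v₀) (μ₁ * (1 + v₁)) + S.aff v₀ v₁ = S.aff w₀ w₁ := by
    simp only [aff, hw₀, hw₁]; module
  have hV : ν₀ • 1 - ν₁ • S.aff w₀ w₁ = S.aff v₀ v₁ := by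
    rw [hv₀, hv₁]; simp only [aff]; module
  calc S.opBr (S.aff v₀ v₁) (S.alpha a) (S.opBr (S.aff μ₀ μ₁) b c)
      = pevOpₗ (S.aff (μ₀ + μ₁ * v₀) (μ₁ * (1 + v₁)))
          (Finsupp.mapRange.linearMap (S.opBr (S.aff v₀ v₁) (S.alpha a)) (S.br b c)) := by
        rw [opBr_apply _ _ b, ← hU,
          pevOpₗ_mapRange _ (opBr_aff_right hcr (S.commute_aff_der v₀ v₁) μ₀ μ₁ _)]
    _ = pevOpₗ (S.aff v₀ v₁) (Finsupp.mapRange.linearMap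
          ((S.opBr (S.aff w₀ w₁)).flip (S.alpha c)) (S.br a b)) := by
        rw [pevOpₗ_mapRange_opBr_alpha hassoc (S.commute_aff _ _ _ _), hW]
    _ = S.opBr (S.aff w₀ w₁) (S.opBr (S.aff ν₀ ν₁) a b) (S.alpha c) := by
        rw [← hV, pevOpₗ_mapRange _ (opBr_aff_left hcl _ ν₀ ν₁ · _), opBr_apply _ _ a]
        rfl

section

include hcl hcr hassoc

theorem lb_alpha_lbOp (l m : ℂ) (a b c : R) :
    S.lb l (S.alpha a) (S.lbOp m c b) = S.lbOp m (S.lb l a c) (S.alpha b) := by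
  simp only [lb_eq_opBr, lbOp_eq_opBr]
  exact opBr_aff_assoc hcl hcr hassoc (by ring) (by ring) (by ring) (by ring) _ _ _

theorem lbOp_lb_alpha (l m : ℂ) (a b c : R) :
    S.lbOp l (S.lb m b c) (S.alpha a) = S.lb m (S.alpha b) (S.lbOp l c a) := by
  simp only [lb_eq_opBr, lbOp_eq_opBr]
  exact (opBr_aff_assoc hcl hcr hassoc (by ring) (by ring) (by ring) (by ring) _ _ _).symm

theorem lbOp_lbOp_alpha (l m : ℂ) (a b c : R) :
    S.lbOp l (S.lbOp m c b) (S.alpha a) = S.lbOp (l + m) (S.alpha c) (S.lbOp l b a) := by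
  simp only [lbOp_eq_opBr]
  exact (opBr_aff_assoc hcl hcr hassoc (by ring) (by ring) (by ring) (by ring) _ _ _).symm

theorem lb_lbOp_alpha (l m : ℂ) (a b c : R) :
    S.lb (l + m) (S.lbOp l b a) (S.alpha c) = S.lb m (S.alpha b) (S.lb l a c) := by
  simp only [lb_eq_opBr, lbOp_eq_opBr]
  exact (opBr_aff_assoc hcl hcr hassoc (by ring) (by ring) (by ring) (by ring) _ _ _).symm

theorem lbOp_alpha_lb (l m : ℂ) (a b c : R) :
    S.lbOp (l + m) (S.alpha c) (S.lb l a b) = S.lbOp m (S.lbOp l c a) (S.alpha b) := by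
  simp only [lb_eq_opBr, lbOp_eq_opBr]
  exact opBr_aff_assoc hcl hcr hassoc (by ring) (by ring) (by ring) (by ring) _ _ _

end

variable (S)

def swapSubst : (ℕ →₀ R) →ₗ[ℂ] (ℕ →₀ R) := substAff (-1) (-S.der)

variable {S} in
theorem pevOpₗ_swapSubst {T : Module.End ℂ R} (hT : Commute T S.der) (p : ℕ →₀ R) :
    pevOpₗ T (S.swapSubst p) = pevOpₗ (-T - S.der) p := by
  rw [swapSubst, pevOpₗ_substAff _ hT.neg_right, neg_one_smul, sub_eq_add_neg]

variable [DirectSum.Decomposition S.G]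

/-- The coefficients of `a_λ b - (-1)^{|a||b|} b_{-λ-∂} a`, extended bilinearly from
homogeneous elements. -/
def commBr : R →ₗ[ℂ] R →ₗ[ℂ] (ℕ →₀ R) :=
  S.br - ∑ i : ZMod 2, ∑ j : ZMod 2, sg i j •
    ((S.br.comp (gradedProj S.G j)).flip.comp (gradedProj S.G i)).compr₂ S.swapSubst

variable {S} in
theorem commBr_of_mem {i j : ZMod 2} {a b : R} (ha : a ∈ S.G i) (hb : b ∈ S.G j) :
    S.commBr a b = S.br a b - sg i j • S.swapSubst (S.br b a) := by
  simp only [commBr, LinearMap.sub_apply, LinearMap.sum_apply,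
    LinearMap.smul_apply, LinearMap.compr₂_apply, LinearMap.comp_apply, LinearMap.flip_apply]
  rw [Fintype.sum_eq_single i, Fintype.sum_eq_single j, gradedProj_of_mem_same _ ha,
    gradedProj_of_mem_same _ hb]
  · intro j' hj'
    rw [gradedProj_of_mem_ne _ hb (Ne.symm hj')]
    simp
  · intro i' hi'
    rw [gradedProj_of_mem_ne _ ha (Ne.symm hi')]
    simp

@[simps]
def commData : Data R where
  der := S.der
  alpha := S.alpha
  G := S.G
  br := S.commBr

theorem commData_aff : S.commData.aff = S.aff := rfl

variable {S}

variable (hder : ∀ i, ∀ a ∈ S.G i, S.der a ∈ S.G i) (halpha : ∀ i, ∀ a ∈ S.G i, S.alpha a ∈ S.G i)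
  (hbr : ∀ i j, ∀ a ∈ S.G i, ∀ b ∈ S.G j, ∀ n, S.br a b n ∈ S.G (i + j))

theorem commData_opBr_of_mem {T : Module.End ℂ R} (hT : Commute T S.der) {i j : ZMod 2}
    {a b : R} (ha : a ∈ S.G i) (hb : b ∈ S.G j) :
    S.commData.opBr T a b = S.opBr T a b - sg i j • S.opBr (-T - S.der) b a := by
  rw [opBr_apply, commData_br, commBr_of_mem ha hb, map_sub, map_smul, pevOpₗ_swapSubst hT]
  rfl

theorem commData_lb_of_mem {i j : ZMod 2} {a b : R} (ha : a ∈ S.G i) (hb : b ∈ S.G j) (l : ℂ) :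
    S.commData.lb l a b = S.lb l a b - sg i j • S.lbOp l b a := by
  have h : -S.aff l 0 - S.der = S.aff (-l) (-1) := by simp only [aff]; module
  rw [lb_eq_opBr, commData_aff, commData_opBr_of_mem (S.commute_aff_der l 0) ha hb, h,
    lb_eq_opBr, lbOp_eq_opBr]

theorem commData_lbOp_of_mem {i j : ZMod 2} {a b : R} (ha : a ∈ S.G i) (hb : b ∈ S.G j)
    (l : ℂ) : S.commData.lbOp l a b = S.lbOp l a b - sg i j • S.lb l b a := by
  have h : -S.aff (-l) (-1) - S.der = S.aff l 0 := by simp only [aff]; module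
  rw [lbOp_eq_opBr, commData_aff, commData_opBr_of_mem (S.commute_aff_der _ _) ha hb, h,
    lb_eq_opBr, lbOp_eq_opBr]

include hder hbr in
theorem commBr_mem (i j : ZMod 2) (a : R) (ha : a ∈ S.G i) (b : R) (hb : b ∈ S.G j) (n : ℕ) :
    S.commBr a b n ∈ S.G (i + j) := by
  rw [commBr_of_mem ha hb, Finsupp.sub_apply, Finsupp.smul_apply]
  refine sub_mem (hbr i j a ha b hb n) (Submodule.smul_mem _ _ (substAff_mem _
    (fun x hx => neg_mem (hder _ x hx)) (fun k => ?_) n))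
  simpa only [add_comm j i] using hbr j i b hb a ha k

include hcl hcr hder in
theorem commData_conf_left (l : ℂ) (a b : R) :
    S.commData.lb l (S.der a) b = -l • S.commData.lb l a b := by
  have hl : Commute (l • 1 : Module.End ℂ R) S.der := (Commute.one_left _).smul_left l
  rw [lb_eq_opBr_smul_one, lb_eq_opBr_smul_one]
  refine apply₂_eq_of_forall_homogeneous S.G (f := (S.commData.opBr (l • 1)).comp S.der)
    (g := -l • S.commData.opBr (l • 1)) (fun i j a ha b hb => ?_) a b
  simp only [LinearMap.comp_apply, LinearMap.smul_apply, commData_opBr_of_mem hl (hder i a ha) hb,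
    commData_opBr_of_mem hl ha hb, opBr_der_left hcl,
    opBr_der_right hcr (hl.neg_left.sub_left (Commute.refl _))]
  simp only [LinearMap.sub_apply, LinearMap.neg_apply, LinearMap.smul_apply,
    Module.End.one_apply]
  module

include hcl hcr hder in
theorem commData_conf_right (l : ℂ) (a b : R) :
    S.commData.lb l a (S.der b) = S.der (S.commData.lb l a b) + l • S.commData.lb l a b := by
  have hl : Commute (l • 1 : Module.End ℂ R) S.der := (Commute.one_left _).smul_left l
  rw [lb_eq_opBr_smul_one, lb_eq_opBr_smul_one]
  refine apply₂_eq_of_forall_homogeneous S.G (f := (S.commData.opBr (l • 1)).compl₂ S.der)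
    (g := (S.commData.opBr (l • 1)).compr₂ S.der + l • S.commData.opBr (l • 1))
    (fun i j a ha b hb => ?_) a b
  simp only [LinearMap.compl₂_apply, LinearMap.compr₂_apply, LinearMap.add_apply,
    LinearMap.smul_apply, commData_opBr_of_mem hl ha (hder j b hb), commData_opBr_of_mem hl ha hb,
    opBr_der_left hcl, opBr_der_right hcr hl]
  simp only [LinearMap.sub_apply, LinearMap.neg_apply, LinearMap.smul_apply,
    Module.End.one_apply, map_sub, map_smul]
  module

theorem commData_skew (i j : ZMod 2) (a : R) (ha : a ∈ S.G i) (b : R) (hb : b ∈ S.G j) (l : ℂ) :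
    S.commData.lb l a b = (-sg i j) • S.commData.lbOp l b a := by
  rw [commData_lb_of_mem ha hb, commData_lbOp_of_mem hb ha, sg_comm j i]
  linear_combination (norm := module) -(sg_mul_self i j) • S.lb l a b

include hcl hcr hassoc hder halpha hbr in
theorem commData_jacobi_of_mem {i j k : ZMod 2} {a b c : R} (ha : a ∈ S.G i) (hb : b ∈ S.G j)
    (hc : c ∈ S.G k) (l m : ℂ) :
    S.commData.lb l (S.alpha a) (S.commData.lb m b c) =
      S.commData.lb (l + m) (S.commData.lb l a b) (S.alpha c) +
        sg i j • S.commData.lb m (S.alpha b) (S.commData.lb l a c) := by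
  have hmem : ∀ {i j : ZMod 2} {x y : R}, x ∈ S.G i → y ∈ S.G j → ∀ z : ℂ,
      S.commData.lb z x y ∈ S.G (i + j) := fun hx hy z => by
    rw [lb_eq_opBr]
    exact S.commData.opBr_mem hder (commBr_mem hder hbr) hx hy z 0
  rw [commData_lb_of_mem (halpha i a ha) (hmem hb hc m),
    commData_lb_of_mem (hmem ha hb l) (halpha k c hc),
    commData_lb_of_mem (halpha j b hb) (hmem ha hc l),
    commData_lb_of_mem hb hc, commData_lb_of_mem ha hb, commData_lb_of_mem ha hc]
  simp only [lb_eq_opBr, lbOp_eq_opBr, map_sub, map_smul, LinearMap.sub_apply,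
    LinearMap.smul_apply]
  simp only [← lb_eq_opBr, ← lbOp_eq_opBr]
  rw [hassoc, lb_alpha_lbOp hcl hcr hassoc l m a b c, lbOp_lb_alpha hcl hcr hassoc l m a b c,
    lbOp_lbOp_alpha hcl hcr hassoc l m a b c, lb_lbOp_alpha hcl hcr hassoc l m a b c,
    lbOp_alpha_lb hcl hcr hassoc l m a b c,
    sg_add_left, sg_add_right, sg_add_right, sg_comm j i]
  linear_combination (norm := module) (sg_mul_self i j) •
    (sg j k • S.lbOp m (S.lb l a c) (S.alpha b) -
      (sg i k * sg j k) • S.lbOp m (S.lbOp l c a) (S.alpha b))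

include hcl hcr hassoc hder halpha hbr in
theorem commData_jacobi (i j : ZMod 2) (a : R) (ha : a ∈ S.G i) (b : R) (hb : b ∈ S.G j)
    (c : R) (l m : ℂ) :
    S.commData.lb l (S.alpha a) (S.commData.lb m b c) =
      S.commData.lb (l + m) (S.commData.lb l a b) (S.alpha c) +
        sg i j • S.commData.lb m (S.alpha b) (S.commData.lb l a c) := by
  induction c using DirectSum.Decomposition.inductionOn S.G with
  | zero => simp [lb_eq_opBr]
  | add c c' hc hc' =>
    simp only [lb_eq_opBr, map_add, smul_add] at hc hc' ⊢
    rw [hc, hc']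
    abel
  | homogeneous c => exact commData_jacobi_of_mem hcl hcr hassoc hder halpha hbr ha hb c.2 l m

end Data

theorem IsHAssoc.isHLCS_commData {S : Data R} (hS : IsHAssoc S) [DirectSum.Decomposition S.G] :
    IsHLCS S.commData where
  internal := hS.internal
  der_even := hS.der_even
  alpha_even := hS.alpha_even
  alpha_der := hS.alpha_der
  br_grade := Data.commBr_mem (S := S) hS.der_even hS.br_grade
  conf_left := Data.commData_conf_left hS.conf_left hS.conf_right hS.der_even
  conf_right := Data.commData_conf_right hS.conf_left hS.conf_right hS.der_even
  skew := Data.commData_skew (S := S)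
  jacobi := Data.commData_jacobi (S := S) hS.conf_left hS.conf_right hS.assoc hS.der_even
    hS.alpha_even hS.br_grade

/-- If `(R, α)` is a Hom-associative conformal superalgebra, then the
`λ`-bracket `[a_λ b] := a_λ b - (-1)^{|a||b|} b_{-λ-∂} a` (on homogeneous elements,
extended bilinearly) makes `(R, α)` a Hom-Lie conformal superalgebra. -/
theorem homAssoc_to_homLie (S : Data R) (hS : IsHAssoc S) :
    ∃ S' : Data R, S'.der = S.der ∧ S'.alpha = S.alpha ∧ S'.G = S.G ∧
      (∀ i j, ∀ a ∈ S.G i, ∀ b ∈ S.G j, ∀ l : ℂ,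
        S'.lb l a b = S.lb l a b - sg i j • S.lbOp l b a) ∧
      IsHLCS S' := by
  let : DirectSum.Decomposition S.G := hS.internal.chooseDecomposition
  exact ⟨S.commData, rfl, rfl, rfl, fun _ _ _ ha _ hb l => Data.commData_lb_of_mem ha hb l,
    hS.isHLCS_commData⟩

end HLCS
end
end

section
/- Let (g, [·,·], α) be a Hom-Lie superalgebra over ℂ. Then Cur g := ℂ[∂] ⊗ g, with ℤ₂-grading (Cur g)_θ = ℂ[∂] ⊗ g_θ, twist map α(f(∂) ⊗ a) = f(∂) ⊗ α(a), and λ-bracket [(f(∂) ⊗ a)_λ (g(∂) ⊗ b)] = f(−λ) g(∂+λ) ⊗ [a, b] for a, b ∈ g, is a Hom-Lie conformal superalgebra. -/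
noncomputable section

namespace HLCS

variable {V : Type} [AddCommGroup V] [Module ℂ V]

/-- The data of a `ℤ₂`-graded complex vector space with a bilinear bracket and a twist. -/
structure SuperData (V : Type) [AddCommGroup V] [Module ℂ V] where
  alpha : Module.End ℂ V
  G : ZMod 2 → Submodule ℂ V
  br : V →ₗ[ℂ] V →ₗ[ℂ] V

/-- `(V, [·,·], α)` is a Hom-Lie superalgebra. -/
structure IsHLSuper (L : SuperData V) : Prop where
  internal : DirectSum.IsInternal L.G
  alpha_even : ∀ i, ∀ a ∈ L.G i, L.alpha a ∈ L.G i
  br_grade : ∀ i j, ∀ a ∈ L.G i, ∀ b ∈ L.G j, L.br a b ∈ L.G (i + j)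
  skew : ∀ i j, ∀ a ∈ L.G i, ∀ b ∈ L.G j, L.br a b = (-sg i j) • L.br b a
  jacobi : ∀ i j, ∀ a ∈ L.G i, ∀ b ∈ L.G j, ∀ c : V,
    L.br (L.alpha a) (L.br b c) =
      L.br (L.br a b) (L.alpha c) + sg i j • L.br (L.alpha b) (L.br a c)

/-- The lift of a subspace `W ⊆ V` to `ℂ[∂] ⊗ V` (coefficient-wise membership). -/
def liftG (W : Submodule ℂ V) : Submodule ℂ (ℕ →₀ V) where
  carrier := {p | ∀ n, p n ∈ W}
  add_mem' := by
    intro p q hp hq n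
    rw [Finsupp.add_apply]
    exact W.add_mem (hp n) (hq n)
  zero_mem' := by
    intro n
    rw [Finsupp.zero_apply]
    exact W.zero_mem
  smul_mem' := by
    intro c p hp n
    rw [Finsupp.smul_apply]
    exact W.smul_mem c (hp n)

/-- The element `f(∂) ⊗ a` of `Cur V = ℂ[∂] ⊗ V`, encoded in `ℕ →₀ V`. -/
def curElt (f : Polynomial ℂ) (a : V) : ℕ →₀ V :=
  f.sum fun n c => Finsupp.single n (c • a)

end HLCS

/-!
On generators the bracket is `[(∂^m ⊗ a)_λ (∂^k ⊗ b)] = (-λ)^m (∂+λ)^k ⊗ [a, b]`, so by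
bilinearity `[p_λ q] = [p(-λ), q(∂+λ)]` for all `p, q ∈ ℂ[∂] ⊗ g`, where `p(-λ) ∈ g` is bracketed
with each coefficient of `q(∂+λ)`; likewise `[q_{-λ-∂} p] = [q(∂+λ), p(-λ)]`. In this closed form
every axiom reduces to the corresponding one of `g`: sesquilinearity comes from
`(∂p)(-λ) = -λ p(-λ)` and `(∂q)(∂+λ) = (∂+λ) q(∂+λ)`, skew-symmetry is that of `g`, and since the
substitutions `∂ ↦ ∂+λ` compose additively and `q(∂+λ)` evaluated at `∂ = -λ-μ` is `q(-μ)`, the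
three terms of the Jacobi identity are those of the Hom-Jacobi identity of `g` for `p(-λ)`, `q(-μ)`
and the coefficients of `r(∂+λ+μ)`.
-/

open Polynomial

namespace HLCS

section Coefficients

variable {M : Type} [AddCommGroup M] [Module ℂ M]

@[simp]
theorem pev_single (l : ℂ) (n : ℕ) (x : M) : pev l (Finsupp.single n x) = l ^ n • x :=
  Finsupp.sum_single_index (smul_zero _)

@[simp]
theorem pev_zero (l : ℂ) : pev l (0 : ℕ →₀ M) = 0 :=
  Finsupp.sum_zero_index

@[simp]
theorem pev_add (l : ℂ) (p q : ℕ →₀ M) : pev l (p + q) = pev l p + pev l q :=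
  Finsupp.sum_add_index' (fun _ => smul_zero _) fun _ => smul_add _

@[simp]
theorem pevOp_single (T : Module.End ℂ M) (n : ℕ) (x : M) :
    pevOp T (Finsupp.single n x) = (T ^ n) x :=
  Finsupp.sum_single_index (map_zero _)

@[simp]
theorem pevOp_zero (T : Module.End ℂ M) : pevOp T (0 : ℕ →₀ M) = 0 :=
  Finsupp.sum_zero_index

@[simp]
theorem pevOp_add (T : Module.End ℂ M) (p q : ℕ →₀ M) :
    pevOp T (p + q) = pevOp T p + pevOp T q :=
  Finsupp.sum_add_index' (fun _ => map_zero _) fun _ => map_add _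

theorem pev_eq_pevOp (l : ℂ) (p : ℕ →₀ M) : pev l p = pevOp (l • 1) p := by
  induction p using Finsupp.induction_linear with
  | zero => simp
  | add p q hp hq => simp [hp, hq]
  | single n x => simp [_root_.smul_pow]

theorem pev_mapRange {N : Type} [AddCommGroup N] [Module ℂ N] (g : M →ₗ[ℂ] N) (l : ℂ)
    (p : ℕ →₀ M) : pev l (Finsupp.mapRange.linearMap g p) = g (pev l p) := by
  induction p using Finsupp.induction_linear with
  | zero => simp
  | add p q hp hq => rw [map_add, pev_add, pev_add, hp, hq, map_add]
  | single n x => simp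

end Coefficients

variable {V : Type} [AddCommGroup V] [Module ℂ V]

@[simp]
theorem curElt_apply (f : ℂ[X]) (a : V) (n : ℕ) : curElt f a n = f.coeff n • a := by
  classical
  simp only [curElt, Polynomial.sum, Finsupp.finsetSum_apply, Finsupp.single_apply]
  rw [Finset.sum_ite_eq', ite_eq_left_iff]
  intro hn
  rw [Polynomial.notMem_support_iff.mp hn, zero_smul]

theorem curElt_add_left (f g : ℂ[X]) (a : V) : curElt (f + g) a = curElt f a + curElt g a := by
  ext; simp [add_smul]

theorem curElt_sub_left (f g : ℂ[X]) (a : V) : curElt (f - g) a = curElt f a - curElt g a := by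
  ext; simp [sub_smul]

theorem curElt_smul_left (c : ℂ) (f : ℂ[X]) (a : V) : curElt (c • f) a = c • curElt f a := by
  ext; simp [mul_smul]

theorem curElt_smul_left_eq_smul_right (c : ℂ) (f : ℂ[X]) (a : V) :
    curElt (c • f) a = curElt f (c • a) := by
  ext; simp [smul_smul, mul_comm c]

theorem curElt_monomial (n : ℕ) (c : ℂ) (a : V) :
    curElt (monomial n c) a = Finsupp.single n (c • a) := by
  ext; simp [coeff_monomial, Finsupp.single_apply, ite_smul]

def curEltₗ : ℂ[X] →ₗ[ℂ] V →ₗ[ℂ] ℕ →₀ V :=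
  LinearMap.mk₂ ℂ curElt curElt_add_left curElt_smul_left
    (fun f a b => by ext; simp)
    (fun c f a => by ext; simp only [curElt_apply, Finsupp.smul_apply]; exact smul_comm _ _ _)

theorem mapRange_curElt (g : V →ₗ[ℂ] V) (f : ℂ[X]) (a : V) :
    Finsupp.mapRange.linearMap g (curElt f a) = curElt f (g a) := by
  ext; simp

theorem pev_curElt (l : ℂ) (f : ℂ[X]) (a : V) : pev l (curElt f a) = f.eval l • a := by
  induction f using Polynomial.induction_on' with
  | add f g hf hg => simp [curElt_add_left, hf, hg, add_smul]
  | monomial n c => simp [curElt_monomial, smul_smul, mul_comm]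

def der : Module.End ℂ (ℕ →₀ V) := Finsupp.lmapDomain V ℂ (· + 1)

@[simp]
theorem der_single (n : ℕ) (a : V) : der (Finsupp.single n a) = Finsupp.single (n + 1) a :=
  Finsupp.mapDomain_single

theorem der_curElt (f : ℂ[X]) (a : V) : der (curElt f a) = curElt (X * f) a := by
  induction f using Polynomial.induction_on' with
  | add f g hf hg => simp only [mul_add, curElt_add_left, map_add, hf, hg]
  | monomial n c => simp [curElt_monomial, X_mul_monomial]

theorem der_mapRange (g : V →ₗ[ℂ] V) (p : ℕ →₀ V) :
    der (Finsupp.mapRange.linearMap g p) = Finsupp.mapRange.linearMap g (der p) :=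
  Finsupp.mapDomain_mapRange _ _ _ (map_zero g) (map_add g)

theorem pev_der (l : ℂ) (p : ℕ →₀ V) : pev l (der p) = l • pev l p := by
  induction p using Finsupp.induction_linear with
  | zero => simp
  | add p q hp hq => simp [hp, hq]
  | single n a => simp [pow_succ', mul_smul]

def shift (l : ℂ) : Module.End ℂ (ℕ →₀ V) :=
  Finsupp.lsum ℂ fun n => curEltₗ (taylor l (X ^ n))

@[simp]
theorem shift_single (l : ℂ) (n : ℕ) (a : V) :
    shift l (Finsupp.single n a) = curElt (taylor l (X ^ n)) a :=
  Finsupp.lsum_single ..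

theorem shift_curElt (l : ℂ) (f : ℂ[X]) (a : V) :
    shift l (curElt f a) = curElt (taylor l f) a := by
  induction f using Polynomial.induction_on' with
  | add f g hf hg => simp only [curElt_add_left, map_add, hf, hg]
  | monomial n c =>
    rw [curElt_monomial, shift_single, ← smul_X_eq_monomial, map_smul,
      curElt_smul_left_eq_smul_right]

theorem shift_shift (l m : ℂ) (p : ℕ →₀ V) : shift l (shift m p) = shift (l + m) p := by
  induction p using Finsupp.induction_linear with
  | zero => simp
  | add p q hp hq => simp [hp, hq]
  | single n a => rw [shift_single, shift_curElt, taylor_taylor, shift_single]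

theorem pev_shift (x l : ℂ) (p : ℕ →₀ V) : pev x (shift l p) = pev (x + l) p := by
  induction p using Finsupp.induction_linear with
  | zero => simp
  | add p q hp hq => simp [hp, hq]
  | single n a => rw [shift_single, pev_curElt, taylor_eval, pev_single, eval_X_pow]

theorem shift_mapRange (l : ℂ) (g : V →ₗ[ℂ] V) (p : ℕ →₀ V) :
    shift l (Finsupp.mapRange.linearMap g p) = Finsupp.mapRange.linearMap g (shift l p) := by
  induction p using Finsupp.induction_linear with
  | zero => simp
  | add p q hp hq => rw [map_add, map_add, hp, hq, map_add, map_add]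
  | single n a =>
    rw [shift_single, mapRange_curElt, ← shift_single, Finsupp.mapRange.linearMap_apply,
      Finsupp.mapRange_single]

theorem shift_der (l : ℂ) (p : ℕ →₀ V) : shift l (der p) = der (shift l p) + l • shift l p := by
  induction p using Finsupp.induction_linear with
  | zero => simp
  | add p q hp hq => simp only [map_add, hp, hq, smul_add]; abel
  | single n a =>
    rw [der_single, shift_single, shift_single, der_curElt, ← curElt_smul_left,
      ← curElt_add_left, taylor_X_pow, taylor_X_pow, pow_succ', smul_eq_C_mul, ← add_mul]

/-- `F ⊗ w` for `F ∈ ℂ[∂][λ]`, the outer variable `λ` indexing the outer coefficients. -/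
def curElt2 (F : ℂ[X][X]) : V →ₗ[ℂ] ℕ →₀ ℕ →₀ V where
  toFun w := Finsupp.mapRange (fun f => curElt f w) (by ext; simp) F.toFinsupp.coeff
  map_add' v w := by ext; simp [smul_add]
  map_smul' c w := by ext; simp [smul_comm c]

@[simp]
theorem curElt2_apply (F : ℂ[X][X]) (w : V) (n : ℕ) : curElt2 F w n = curElt (F.coeff n) w := by
  simp [curElt2, toFinsupp_apply]

theorem pow_apply_curElt {T : Module.End ℂ (ℕ →₀ V)} {P : ℂ[X]}
    (hT : ∀ f a, T (curElt f a) = curElt (P * f) a) (n : ℕ) (f : ℂ[X]) (a : V) :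
    (T ^ n) (curElt f a) = curElt (P ^ n * f) a := by
  induction n generalizing f with
  | zero => simp
  | succ n ih => rw [pow_succ, Module.End.mul_apply, hT, ih, pow_succ, mul_assoc]

theorem pevOp_curElt2 {T : Module.End ℂ (ℕ →₀ V)} {P : ℂ[X]}
    (hT : ∀ f a, T (curElt f a) = curElt (P * f) a) (F : ℂ[X][X]) (w : V) :
    pevOp T (curElt2 F w) = curElt (F.eval P) w := by
  induction F using Polynomial.induction_on' with
  | add F G hF hG =>
    have : curElt2 (F + G) w = curElt2 F w + curElt2 G w := by ext; simp [curElt_add_left]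
    rw [this, pevOp_add, hF, hG, eval_add, curElt_add_left]
  | monomial n f =>
    have : curElt2 (monomial n f) w = Finsupp.single n (curElt f w) := by
      ext m; by_cases h : n = m <;> simp [coeff_monomial, h]
    rw [this, pevOp_single, pow_apply_curElt hT, eval_monomial, mul_comm]

theorem pev_curElt2 (l : ℂ) (F : ℂ[X][X]) (w : V) :
    pev l (curElt2 F w) = curElt (F.eval (C l)) w := by
  refine (pev_eq_pevOp l _).trans (pevOp_curElt2 (fun f a => ?_) F w)
  rw [← smul_eq_C_mul, curElt_smul_left]
  rfl

/-- `(-λ)^m (∂+λ)^k ∈ ℂ[∂][λ]` (with `C X = ∂`), the factor of `[a, b]` in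
`[(∂^m ⊗ a)_λ (∂^k ⊗ b)]`. -/
def brPoly (m k : ℕ) : ℂ[X][X] := (-X) ^ m * (C X + X) ^ k

def curBr (L : SuperData V) : (ℕ →₀ V) →ₗ[ℂ] (ℕ →₀ V) →ₗ[ℂ] ℕ →₀ ℕ →₀ V :=
  Finsupp.lsum ℂ fun m => (Finsupp.lsum ℂ fun k => (L.br.compr₂ (curElt2 (brPoly m k))).flip).flip

theorem curBr_single (L : SuperData V) (m k : ℕ) (a b : V) :
    curBr L (Finsupp.single m a) (Finsupp.single k b) = curElt2 (brPoly m k) (L.br a b) := by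
  simp [curBr]

def curData (L : SuperData V) : Data (ℕ →₀ V) where
  der := der
  alpha := Finsupp.mapRange.linearMap L.alpha
  G i := liftG (L.G i)
  br := curBr L

theorem curData_alpha (L : SuperData V) :
    (curData L).alpha = Finsupp.mapRange.linearMap L.alpha := rfl

theorem brPoly_eval_C (m k : ℕ) (l : ℂ) :
    (brPoly m k).eval (C l) = (-l) ^ m • (X + C l) ^ k := by
  simp [brPoly, smul_eq_C_mul]

theorem brPoly_eval_sub_X (m k : ℕ) (l : ℂ) :
    (brPoly m k).eval (C (-l) - X) = (-l) ^ k • (X + C l) ^ m := by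
  simp [brPoly, smul_eq_C_mul]
  ring

theorem curData_lb (L : SuperData V) (l : ℂ) (p q : ℕ →₀ V) :
    (curData L).lb l p q = Finsupp.mapRange.linearMap (L.br (pev (-l) p)) (shift l q) := by
  change pev l (curBr L p q) = _
  induction p using Finsupp.induction_linear with
  | zero => ext; simp
  | add p p' hp hp' => ext; simp [hp, hp']
  | single m a =>
    induction q using Finsupp.induction_linear with
    | zero => simp
    | add q q' hq hq' => simp only [map_add, pev_add, hq, hq']
    | single k b =>
      rw [curBr_single, pev_curElt2, brPoly_eval_C, curElt_smul_left_eq_smul_right, shift_single,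
        mapRange_curElt]
      simp

theorem curData_lbOp (L : SuperData V) (l : ℂ) (p q : ℕ →₀ V) :
    (curData L).lbOp l q p = Finsupp.mapRange.linearMap (L.br.flip (pev (-l) p)) (shift l q) := by
  change pevOp ((-l) • 1 - der) (curBr L q p) = _
  have hT : ∀ (f : ℂ[X]) (a : V),
      ((-l) • 1 - der : Module.End ℂ (ℕ →₀ V)) (curElt f a) = curElt ((C (-l) - X) * f) a := by
    intro f a
    rw [sub_mul, ← smul_eq_C_mul, curElt_sub_left, curElt_smul_left, ← der_curElt]
    rfl
  induction p using Finsupp.induction_linear with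
  | zero => ext; simp
  | add p p' hp hp' => ext; simp [hp, hp']
  | single k b =>
    induction q using Finsupp.induction_linear with
    | zero => simp
    | add q q' hq hq' => simp only [map_add, LinearMap.add_apply, pevOp_add, hq, hq']
    | single m a =>
      rw [curBr_single, pevOp_curElt2 hT, brPoly_eval_sub_X, curElt_smul_left_eq_smul_right,
        shift_single, mapRange_curElt]
      simp

theorem curData_lb_curElt (L : SuperData V) (l : ℂ) (f q : ℂ[X]) (a b : V) :
    (curData L).lb l (curElt f a) (curElt q b) =
      f.eval (-l) • curElt (q.comp (X + C l)) (L.br a b) := by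
  rw [curData_lb, pev_curElt, shift_curElt, mapRange_curElt, map_smul, LinearMap.smul_apply,
    ← curElt_smul_left_eq_smul_right, curElt_smul_left, taylor_apply]

theorem curData_lb_der_left (L : SuperData V) (l : ℂ) (p q : ℕ →₀ V) :
    (curData L).lb l (der p) q = -l • (curData L).lb l p q := by
  ext; simp [curData_lb, pev_der]

theorem curData_lb_der_right (L : SuperData V) (l : ℂ) (p q : ℕ →₀ V) :
    (curData L).lb l p (der q) = der ((curData L).lb l p q) + l • (curData L).lb l p q := by
  rw [curData_lb, curData_lb, shift_der, map_add, map_smul, der_mapRange]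

section Grading

variable {W W₁ W₂ W₃ : Submodule ℂ V}

theorem single_mem_liftG (n : ℕ) {a : V} (ha : a ∈ W) : Finsupp.single n a ∈ liftG W := by
  intro k
  rw [Finsupp.single_apply]
  split_ifs
  exacts [ha, W.zero_mem]

theorem curElt_mem_liftG (f : ℂ[X]) {a : V} (ha : a ∈ W) : curElt f a ∈ liftG W := fun n => by
  rw [curElt_apply]
  exact W.smul_mem _ ha

theorem der_mem_liftG {p : ℕ →₀ V} (hp : p ∈ liftG W) : der p ∈ liftG W :=
  Submodule.finsuppSum_mem _ _ _ _ fun n _ => single_mem_liftG _ (hp n)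

theorem mapRange_mem_liftG {g : V →ₗ[ℂ] V} (hg : ∀ a ∈ W₁, g a ∈ W₂) {p : ℕ →₀ V}
    (hp : p ∈ liftG W₁) : Finsupp.mapRange.linearMap g p ∈ liftG W₂ := fun n => by
  simpa using hg _ (hp n)

theorem pev_mem {p : ℕ →₀ V} (hp : p ∈ liftG W) (l : ℂ) : pev l p ∈ W :=
  Submodule.finsuppSum_mem _ _ _ _ fun n _ => W.smul_mem _ (hp n)

theorem liftG_mono (h : W₁ ≤ W₂) : liftG W₁ ≤ liftG W₂ := fun _ hp n => h (hp n)

theorem disjoint_liftG (h : Disjoint W₁ W₂) : Disjoint (liftG W₁) (liftG W₂) := by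
  rw [Submodule.disjoint_def] at h ⊢
  intro p hp₁ hp₂
  ext n
  exact h _ (hp₁ n) (hp₂ n)

theorem isInternal_liftG {ι : Type} [DecidableEq ι] {G : ι → Submodule ℂ V}
    (h : DirectSum.IsInternal G) : DirectSum.IsInternal fun i => liftG (G i) := by
  rw [DirectSum.isInternal_submodule_iff_iSupIndep_and_iSup_eq_top] at h ⊢
  refine ⟨fun i => (disjoint_liftG (h.1 i)).mono_right ?_, eq_top_iff.mpr fun p _ => ?_⟩
  · exact iSup₂_le fun j hj => liftG_mono (le_iSup₂ (f := fun j (_ : j ≠ i) => G j) j hj)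
  · rw [← Finsupp.sum_single p]
    refine Submodule.finsuppSum_mem _ _ _ _ fun n _ => ?_
    have hpn : p n ∈ ⨆ i, G i := h.2 ▸ Submodule.mem_top
    refine Submodule.iSup_induction G (motive := fun a => Finsupp.single n a ∈ ⨆ i, liftG (G i))
      hpn (fun i a ha => Submodule.mem_iSup_of_mem i (single_mem_liftG n ha)) (by simp)
      fun a b ha hb => ?_
    rw [Finsupp.single_add]
    exact add_mem ha hb

theorem curBr_mem_liftG (L : SuperData V) (h : ∀ a ∈ W₁, ∀ b ∈ W₂, L.br a b ∈ W₃)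
    {p q : ℕ →₀ V} (hp : p ∈ liftG W₁) (hq : q ∈ liftG W₂) (n : ℕ) :
    curBr L p q n ∈ liftG W₃ := by
  have : curBr L p q = p.sum fun m a => q.sum fun k b => curElt2 (brPoly m k) (L.br a b) := by
    simp [curBr]
  rw [this, Finsupp.sum_apply]
  refine Submodule.finsuppSum_mem _ _ _ _ fun m _ => ?_
  rw [Finsupp.sum_apply]
  refine Submodule.finsuppSum_mem _ _ _ _ fun k _ => ?_
  rw [curElt2_apply]
  exact curElt_mem_liftG _ (h _ (hp m) _ (hq k))

end Grading

theorem curData_lb_eq_smul_lbOp (L : SuperData V) {W₁ W₂ : Submodule ℂ V} {c : ℂ}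
    (h : ∀ a ∈ W₁, ∀ b ∈ W₂, L.br a b = c • L.br b a) {p q : ℕ →₀ V} (hp : p ∈ liftG W₁)
    (hq : q ∈ liftG W₂) (l : ℂ) :
    (curData L).lb l p q = c • (curData L).lbOp l q p := by
  rw [curData_lb, curData_lbOp, ← shift_mapRange, ← shift_mapRange, ← map_smul]
  congr 1
  ext n
  simpa using h _ (pev_mem hp (-l)) _ (hq n)

theorem curData_jacobi (L : SuperData V) {W₁ W₂ : Submodule ℂ V} {s : ℂ}
    (h : ∀ a ∈ W₁, ∀ b ∈ W₂, ∀ c : V, L.br (L.alpha a) (L.br b c) =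
      L.br (L.br a b) (L.alpha c) + s • L.br (L.alpha b) (L.br a c))
    {p q : ℕ →₀ V} (hp : p ∈ liftG W₁) (hq : q ∈ liftG W₂) (r : ℕ →₀ V) (l m : ℂ) :
    (curData L).lb l ((curData L).alpha p) ((curData L).lb m q r) =
      (curData L).lb (l + m) ((curData L).lb l p q) ((curData L).alpha r) +
        s • (curData L).lb m ((curData L).alpha q) ((curData L).lb l p r) := by
  have hshift : -(l + m) + l = -m := by ring
  simp only [curData_lb, curData_alpha, shift_mapRange, pev_mapRange, pev_shift, hshift,
    shift_shift, add_comm m l]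
  ext n
  simpa using h _ (pev_mem hp (-l)) _ (pev_mem hq (-m)) (shift (l + m) r n)

theorem isHLCS_curData {L : SuperData V} (hL : IsHLSuper L) : IsHLCS (curData L) where
  internal := isInternal_liftG hL.internal
  der_even _ _ ha := der_mem_liftG ha
  alpha_even i _ ha := mapRange_mem_liftG (hL.alpha_even i) ha
  alpha_der a := (der_mapRange _ a).symm
  br_grade i j _ ha _ hb := curBr_mem_liftG L (hL.br_grade i j) ha hb
  conf_left := curData_lb_der_left L
  conf_right := curData_lb_der_right L
  skew i j _ ha _ hb := curData_lb_eq_smul_lbOp L (hL.skew i j) ha hb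
  jacobi i j _ ha _ hb := curData_jacobi L (hL.jacobi i j) ha hb

/-- For a Hom-Lie superalgebra `(g, [·,·], α)`, the current algebra
`Cur g = ℂ[∂] ⊗ g` (encoded as `ℕ →₀ g`), with `∂` acting as multiplication by the
variable, twist `f(∂) ⊗ a ↦ f(∂) ⊗ α(a)`, grading `(Cur g)_θ = ℂ[∂] ⊗ g_θ` and
`λ`-bracket `[(f(∂) ⊗ a)_λ (q(∂) ⊗ b)] = f(-λ) q(∂ + λ) ⊗ [a, b]`, is a Hom-Lie
conformal superalgebra. -/
theorem current_homLie (L : SuperData V) (hL : IsHLSuper L) :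
    ∃ S : Data (ℕ →₀ V),
      S.der = Finsupp.lmapDomain V ℂ (fun n => n + 1) ∧
      S.alpha = Finsupp.mapRange.linearMap (L.alpha : V →ₗ[ℂ] V) ∧
      S.G = (fun i => liftG (L.G i)) ∧
      (∀ (f q : Polynomial ℂ) (a b : V) (l : ℂ),
        S.lb l (curElt f a) (curElt q b) =
          f.eval (-l) • curElt (q.comp (Polynomial.X + Polynomial.C l)) (L.br a b)) ∧
      IsHLCS S :=
  ⟨curData L, rfl, rfl, rfl, fun f q a b l => curData_lb_curElt L l f q a b, isHLCS_curData hL⟩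

end HLCS
end
end

section
/- Let (R, α) be a Hom-Lie conformal superalgebra, (ρ, M, β) a representation of R, and M* the dual space of M. Define ρ̃ : R → Cend(M*) by (ρ̃(a)_λ f)(u) = −f(ρ(a)_λ u) for f ∈ M*, u ∈ M, and take β̃ = β acting by precomposition. Then (ρ̃, M*, β̃) is a representation of (R, α) if and only if β ∘ ρ([a_λ b])_{λ+μ} = (−1)^{|a||b|} ρ(a)_λ ∘ ρ(α(b))_μ − ρ(b)_μ ∘ ρ(α(a))_λ for all a, b ∈ R. -/
noncomputable section

namespace HLCS

variable {R M : Type} [AddCommGroup R] [Module ℂ R] [AddCommGroup M] [Module ℂ M]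

/-- The data of a conformal module `(M, β)` over `R`: a `ℤ₂`-graded `ℂ[∂]`-module
together with a map `ρ` sending `a ∈ R` to a conformal linear map on `M`
(encoded via its `λ`-coefficients). -/
structure RepData (R M : Type) [AddCommGroup R] [Module ℂ R]
    [AddCommGroup M] [Module ℂ M] where
  derM : Module.End ℂ M
  beta : Module.End ℂ M
  GM : ZMod 2 → Submodule ℂ M
  rho : R →ₗ[ℂ] M →ₗ[ℂ] (ℕ →₀ M)

namespace RepData

variable (P : RepData R M)

/-- `ρ(a)_λ m` evaluated at `λ = l`. -/
def ev (l : ℂ) (a : R) (m : M) : M := pev l (P.rho a m)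

/-- `ρ(a)_{-l-∂} m`. -/
def evOp (l : ℂ) (a : R) (m : M) : M :=
  pevOp ((-l) • (1 : Module.End ℂ M) - P.derM) (P.rho a m)

end RepData

/-- `(ρ, M, β)` is a representation of the Hom-Lie conformal superalgebra `(R, α)`. -/
structure IsRep (S : Data R) (P : RepData R M) : Prop where
  internal : DirectSum.IsInternal P.GM
  derM_even : ∀ i, ∀ m ∈ P.GM i, P.derM m ∈ P.GM i
  beta_even : ∀ i, ∀ m ∈ P.GM i, P.beta m ∈ P.GM i
  beta_derM : ∀ m, P.beta (P.derM m) = P.derM (P.beta m)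
  rho_grade : ∀ i j, ∀ a ∈ S.G i, ∀ m ∈ P.GM j, ∀ n, P.rho a m n ∈ P.GM (i + j)
  conf_left : ∀ (l : ℂ) (a : R) (m : M), P.ev l (S.der a) m = -l • P.ev l a m
  conf_right : ∀ (l : ℂ) (a : R) (m : M),
    P.ev l a (P.derM m) = P.derM (P.ev l a m) + l • P.ev l a m
  beta_comm : ∀ (l : ℂ) (a : R) (m : M), P.ev l a (P.beta m) = P.beta (P.ev l a m)
  module_axiom : ∀ i j, ∀ a ∈ S.G i, ∀ b ∈ S.G j, ∀ (u : M) (l m : ℂ),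
    P.ev (l + m) (S.lb l a b) (P.beta u) =
      P.ev l (S.alpha a) (P.ev m b u) - sg i j • P.ev m (S.alpha b) (P.ev l a u)

end HLCS
namespace HLCS

variable {R M : Type} [AddCommGroup R] [Module ℂ R] [AddCommGroup M] [Module ℂ M]

/-!
Functionals separate the points of `M`, and every axiom for `(ρ̃, M*, β̃)`, evaluated at
`u ∈ M`, is `f` applied to an identity in `M`. All axioms except the module axiom therefore
transfer from `(ρ, M, β)` (the dual grading is a direct sum because dual annihilators of
complementary subspaces are complementary), while the module axiom for `M*` becomes the stated
identity, dualization reversing the order of the compositions.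
-/

section PolynomialEvaluation

variable {A B : Type} [AddCommGroup A] [Module ℂ A] [AddCommGroup B] [Module ℂ B]

theorem map_pev (F : A →ₗ[ℂ] B) (l : ℂ) (p : ℕ →₀ A) :
    F (pev l p) = pev l (p.mapRange F F.map_zero) := by
  rw [pev, pev, map_finsuppSum, Finsupp.sum_mapRange_index (by simp)]
  simp

theorem pev_eq_eval (l : ℂ) (p : ℕ →₀ ℂ) :
    pev l p = (Polynomial.ofFinsupp (AddMonoidAlgebra.ofCoeff p)).eval l := by
  rw [Polynomial.eval_eq_sum, Polynomial.sum, pev, Finsupp.sum]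
  simp [Polynomial.coeff, mul_comm]

theorem eq_of_forall_pev_eq {p q : ℕ →₀ ℂ} (h : ∀ l : ℂ, pev l p = pev l q) : p = q := by
  have hpoly : Polynomial.ofFinsupp (AddMonoidAlgebra.ofCoeff p) =
      Polynomial.ofFinsupp (AddMonoidAlgebra.ofCoeff q) :=
    Polynomial.funext fun l => by rw [← pev_eq_eval, ← pev_eq_eval, h]
  exact congrArg (fun r => r.toFinsupp.coeff) hpoly

end PolynomialEvaluation

section DualGrading

theorem isInternal_zmod_two_iff {K V : Type} [Ring K] [AddCommGroup V] [Module K V]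
    (G : ZMod 2 → Submodule K V) : DirectSum.IsInternal G ↔ IsCompl (G 0) (G 1) :=
  DirectSum.isInternal_submodule_iff_isCompl G (i := (0 : ZMod 2)) (j := 1) (by decide) <| by
    ext i; simp only [Set.mem_univ, Set.mem_insert_iff, Set.mem_singleton_iff, true_iff]
    revert i; decide

theorem isInternal_dualAnnihilator_add_one {K V : Type} [Field K] [AddCommGroup V] [Module K V]
    {G : ZMod 2 → Submodule K V} (hG : DirectSum.IsInternal G) :
    DirectSum.IsInternal fun i => (G (i + 1)).dualAnnihilator := by
  rw [isInternal_zmod_two_iff] at hG ⊢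
  exact Subspace.isCompl_dualAnnihilator hG.symm

end DualGrading

section DualRepresentation

variable {S : Data R} {P : RepData R M} {P' : RepData R (Module.Dual ℂ M)}

theorem dual_GM_eq (hG : ∀ (i : ZMod 2) (f : Module.Dual ℂ M),
      f ∈ P'.GM i ↔ ∀ m ∈ P.GM (i + 1), f m = 0) (i : ZMod 2) :
    P'.GM i = (P.GM (i + 1)).dualAnnihilator := by
  ext f
  rw [hG, Submodule.mem_dualAnnihilator]

theorem dual_rho_apply (hrho : ∀ (l : ℂ) (a : R) (f : Module.Dual ℂ M) (m : M),
      P'.ev l a f m = -(f (P.ev l a m))) (a : R) (f : Module.Dual ℂ M) (u : M) (n : ℕ) :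
    P'.rho a f n u = -(f (P.rho a u n)) := by
  have hcoeff : (P'.rho a f).mapRange (Module.Dual.eval ℂ M u) (map_zero _) =
      (P.rho a u).mapRange (-f) (map_zero _) := by
    refine eq_of_forall_pev_eq fun l => ?_
    rw [← map_pev, ← map_pev]
    exact hrho l a f u
  simpa using DFunLike.congr_fun hcoeff n

theorem dual_rho_grade (hP : IsRep S P)
    (hG : ∀ (i : ZMod 2) (f : Module.Dual ℂ M),
      f ∈ P'.GM i ↔ ∀ m ∈ P.GM (i + 1), f m = 0)
    (hrho : ∀ (l : ℂ) (a : R) (f : Module.Dual ℂ M) (m : M),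
      P'.ev l a f m = -(f (P.ev l a m))) :
    ∀ i j, ∀ a ∈ S.G i, ∀ f ∈ P'.GM j, ∀ n, P'.rho a f n ∈ P'.GM (i + j) := by
  intro i j a ha f hf n
  rw [hG] at hf ⊢
  intro m hm
  have hparity : ∀ i j : ZMod 2, i + (i + j + 1) = j + 1 := by decide
  have hmem : P.rho a m n ∈ P.GM (j + 1) := hparity i j ▸ hP.rho_grade _ _ a ha m hm n
  rw [dual_rho_apply hrho, hf _ hmem, neg_zero]

theorem dual_module_axiom_sub_apply
    (hbeta : ∀ (f : Module.Dual ℂ M) (m : M), P'.beta f m = f (P.beta m))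
    (hrho : ∀ (l : ℂ) (a : R) (f : Module.Dual ℂ M) (m : M),
      P'.ev l a f m = -(f (P.ev l a m)))
    (a b a' b' c : R) (l m s : ℂ) (f : Module.Dual ℂ M) (u : M) :
    (P'.ev (l + m) c (P'.beta f) - (P'.ev l a' (P'.ev m b f) - s • P'.ev m b' (P'.ev l a f))) u =
      -f (P.beta (P.ev (l + m) c u) - (s • P.ev l a (P.ev m b' u) - P.ev m b (P.ev l a' u))) := by
  simp only [LinearMap.sub_apply, LinearMap.smul_apply, hrho, hbeta, map_sub, map_smul,
    smul_eq_mul]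
  ring

theorem dual_module_axiom_iff
    (hbeta : ∀ (f : Module.Dual ℂ M) (m : M), P'.beta f m = f (P.beta m))
    (hrho : ∀ (l : ℂ) (a : R) (f : Module.Dual ℂ M) (m : M),
      P'.ev l a f m = -(f (P.ev l a m)))
    (a b a' b' c : R) (l m s : ℂ) :
    (∀ f : Module.Dual ℂ M,
      P'.ev (l + m) c (P'.beta f) = P'.ev l a' (P'.ev m b f) - s • P'.ev m b' (P'.ev l a f)) ↔
    ∀ u : M, P.beta (P.ev (l + m) c u) = s • P.ev l a (P.ev m b' u) - P.ev m b (P.ev l a' u) := by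
  simp_rw [← sub_eq_zero (b := _ - _), LinearMap.ext_iff,
    dual_module_axiom_sub_apply hbeta hrho, LinearMap.zero_apply, neg_eq_zero]
  rw [forall_comm]
  exact forall_congr' fun u => Module.forall_dual_apply_eq_zero_iff ℂ _

theorem isRep_dual_iff (hP : IsRep S P)
    (hder : ∀ (f : Module.Dual ℂ M) (m : M), P'.derM f m = -(f (P.derM m)))
    (hbeta : ∀ (f : Module.Dual ℂ M) (m : M), P'.beta f m = f (P.beta m))
    (hG : ∀ (i : ZMod 2) (f : Module.Dual ℂ M),
      f ∈ P'.GM i ↔ ∀ m ∈ P.GM (i + 1), f m = 0)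
    (hrho : ∀ (l : ℂ) (a : R) (f : Module.Dual ℂ M) (m : M),
      P'.ev l a f m = -(f (P.ev l a m))) :
    IsRep S P' ↔
      ∀ i j, ∀ a ∈ S.G i, ∀ b ∈ S.G j, ∀ (l m : ℂ) (f : Module.Dual ℂ M),
        P'.ev (l + m) (S.lb l a b) (P'.beta f) =
          P'.ev l (S.alpha a) (P'.ev m b f) - sg i j • P'.ev m (S.alpha b) (P'.ev l a f) := by
  refine ⟨fun h i j a ha b hb l m f => h.module_axiom i j a ha b hb f l m, fun hmod => ?_⟩
  refine
    { internal := ?_, derM_even := ?_, beta_even := ?_, beta_derM := ?_, rho_grade := ?_,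
      conf_left := ?_, conf_right := ?_, beta_comm := ?_,
      module_axiom := fun i j a ha b hb f l m => hmod i j a ha b hb l m f }
  · rw [show P'.GM = _ from funext (dual_GM_eq hG)]
    exact isInternal_dualAnnihilator_add_one hP.internal
  · intro i f hf
    rw [hG] at hf ⊢
    intro m hm
    rw [hder, hf _ (hP.derM_even _ _ hm), neg_zero]
  · intro i f hf
    rw [hG] at hf ⊢
    exact fun m hm => (hbeta f m).trans (hf _ (hP.beta_even _ _ hm))
  · intro f
    ext u
    rw [hbeta, hder, hder, hbeta, hP.beta_derM]
  · exact dual_rho_grade hP hG hrho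
  · intro l a f
    ext u
    rw [LinearMap.smul_apply, hrho, hrho, hP.conf_left, map_smul, smul_eq_mul, smul_eq_mul,
      mul_neg]
  · intro l a f
    ext u
    rw [LinearMap.add_apply, LinearMap.smul_apply, hrho, hder, hder, hrho, hrho, hP.conf_right,
      map_add, map_smul, smul_eq_mul, smul_eq_mul]
    ring
  · intro l a f
    ext u
    rw [hrho, hbeta, hbeta, hrho, hP.beta_comm]

end DualRepresentation

theorem dual_rep_iff_general (S : Data R) (P : RepData R M)
    (hP : IsRep S P)
    (P' : RepData R (Module.Dual ℂ M))
    (hder : ∀ (f : Module.Dual ℂ M) (m : M), P'.derM f m = -(f (P.derM m)))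
    (hbeta : ∀ (f : Module.Dual ℂ M) (m : M), P'.beta f m = f (P.beta m))
    (hG : ∀ (i : ZMod 2) (f : Module.Dual ℂ M),
      f ∈ P'.GM i ↔ ∀ m ∈ P.GM (i + 1), f m = 0)
    (hrho : ∀ (l : ℂ) (a : R) (f : Module.Dual ℂ M) (m : M),
      P'.ev l a f m = -(f (P.ev l a m))) :
    IsRep S P' ↔
      ∀ i j, ∀ a ∈ S.G i, ∀ b ∈ S.G j, ∀ (l m : ℂ) (u : M),
        P.beta (P.ev (l + m) (S.lb l a b) u) =
          sg i j • P.ev l a (P.ev m (S.alpha b) u) - P.ev m b (P.ev l (S.alpha a) u) := by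
  rw [isRep_dual_iff hP hder hbeta hG hrho]
  exact forall₄_congr fun i j a _ => forall₄_congr fun b _ l m =>
    dual_module_axiom_iff hbeta hrho a b _ _ _ l m (sg i j)

/-- Let `(ρ, M, β)` be a representation of the Hom-Lie conformal
superalgebra `(R, α)`, and let `P'` be the data on the dual space `M*` given by
`(ρ̃(a)_λ f)(u) = -f(ρ(a)_λ u)`, `β̃(f) = f ∘ β`, `∂_{M*} f = -f ∘ ∂_M`, with the dual
grading. Then `(ρ̃, M*, β̃)` is a representation of `(R, α)` if and only if
`β ∘ ρ([a_λ b])_{λ+μ} = (-1)^{|a||b|} ρ(a)_λ ∘ ρ(α b)_μ - ρ(b)_μ ∘ ρ(α a)_λ`. -/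
theorem dual_rep_iff (S : Data R) (P : RepData R M)
    (hS : IsHLCS S) (hP : IsRep S P)
    (P' : RepData R (Module.Dual ℂ M))
    (hder : ∀ (f : Module.Dual ℂ M) (m : M), P'.derM f m = -(f (P.derM m)))
    (hbeta : ∀ (f : Module.Dual ℂ M) (m : M), P'.beta f m = f (P.beta m))
    (hG : ∀ (i : ZMod 2) (f : Module.Dual ℂ M),
      f ∈ P'.GM i ↔ ∀ m ∈ P.GM (i + 1), f m = 0)
    (hrho : ∀ (l : ℂ) (a : R) (f : Module.Dual ℂ M) (m : M),
      P'.ev l a f m = -(f (P.ev l a m))) :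
    IsRep S P' ↔
      ∀ i j, ∀ a ∈ S.G i, ∀ b ∈ S.G j, ∀ (l m : ℂ) (u : M),
        P.beta (P.ev (l + m) (S.lb l a b) u) =
          sg i j • P.ev l a (P.ev m (S.alpha b) u) - P.ev m b (P.ev l (S.alpha a) u) :=
  dual_rep_iff_general S P hP P' hder hbeta hG hrho

end HLCS
end
end
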